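/- Let w be a finite word with the following property: for every non-palindromic factor u of w, the longest palindromic prefix p of u and the longest palindromic suffix q of u satisfy p ≠ q, neither p nor q is a factor of the other, and any two non-palindromic factors of w with the same longest palindromic prefix and the same longest palindromic suffix are equal. Then w is rich. -/

import Mathlib

/-!
A non-palindromic complete return `u` to a palindrome `q` (a factor with exactly two occurrences
of `q`, one as a prefix and one as a suffix) would have `q` as both its longest palindromic prefix
and its longest palindromic suffix, which the hypothesis forbids. Hence complete returns to
palindromes in `w` are palindromes, and therefore the longest palindromic suffix of every prefix
of `w` occurs in that prefix only once: an earlier occurrence, taken as late as possible, would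
start a non-palindromic complete return. Appending a letter to a word adds at most one new
palindromic factor, its longest palindromic suffix, and by unioccurrence it always adds one.
-/

/-- The finset of (distinct) palindromic factors of a finite word `w`,
including the empty word. -/
def palFactors {A : Type*} [DecidableEq A] (w : List A) : Finset (List A) :=
  ((w.inits.flatMap List.tails).filter (fun u => u.reverse = u)).toFinset

/-- A finite word `w` is rich if it has exactly `|w| + 1` distinct palindromic factors. -/
def Rich {A : Type*} [DecidableEq A] (w : List A) : Prop :=
  (palFactors w).card = w.length + 1

/-- `p` is the longest palindromic prefix of `u`. -/
def LongestPalPrefix {A : Type*} (p u : List A) : Prop :=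
  p <+: u ∧ p.reverse = p ∧ ∀ p' : List A, p' <+: u → p'.reverse = p' → p'.length ≤ p.length

/-- `q` is the longest palindromic suffix of `u`. -/
def LongestPalSuffix {A : Type*} (q u : List A) : Prop :=
  q <:+ u ∧ q.reverse = q ∧ ∀ q' : List A, q' <:+ u → q'.reverse = q' → q'.length ≤ q.length

open List

section Palindromes

variable {A : Type*}

lemma prefix_iff_suffix_of_reverse_eq {x y : List A} (hx : x.reverse = x) (hy : y.reverse = y) :
    x <+: y ↔ x <:+ y := by
  rw [← reverse_suffix, hx, hy]

lemma prefix_reverse_iff_suffix_of_reverse_eq {x u : List A} (hx : x.reverse = x) :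
    x <+: u.reverse ↔ x <:+ u := by
  rw [← reverse_prefix, hx]

lemma longestPalPrefix_reverse_iff {p u : List A} :
    LongestPalPrefix p u.reverse ↔ LongestPalSuffix p u := by
  constructor
  · rintro ⟨hpu, hp, hmax⟩
    exact ⟨(prefix_reverse_iff_suffix_of_reverse_eq hp).1 hpu, hp, fun q hqu hq =>
      hmax q ((prefix_reverse_iff_suffix_of_reverse_eq hq).2 hqu) hq⟩
  · rintro ⟨hpu, hp, hmax⟩
    exact ⟨(prefix_reverse_iff_suffix_of_reverse_eq hp).2 hpu, hp, fun q hqu hq =>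
      hmax q ((prefix_reverse_iff_suffix_of_reverse_eq hq).1 hqu) hq⟩

lemma exists_longestPalPrefix (u : List A) : ∃ p, LongestPalPrefix p u := by
  classical
  obtain ⟨p, hp, hmax⟩ := ((u.inits.filter fun p => p.reverse = p).toFinset).exists_max_image
    length ⟨[], by simp⟩
  simp only [mem_toFinset, mem_filter, mem_inits, decide_eq_true_eq, and_imp] at hp hmax
  exact ⟨p, hp.1, hp.2, hmax⟩

lemma exists_longestPalSuffix (u : List A) : ∃ q, LongestPalSuffix q u := by
  obtain ⟨q, hq⟩ := exists_longestPalPrefix u.reverse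
  exact ⟨q, longestPalPrefix_reverse_iff.1 hq⟩

def OccursOnlyAtEnds (q u : List A) : Prop :=
  ∀ s t, u = s ++ q ++ t → s = [] ∨ t = []

lemma OccursOnlyAtEnds.reverse {q u : List A} (h : OccursOnlyAtEnds q u) (hq : q.reverse = q) :
    OccursOnlyAtEnds q u.reverse := by
  intro s t hst
  have : u = t.reverse ++ q ++ s.reverse := by
    rw [← reverse_reverse u, hst]
    simp [hq]
  simpa [or_comm] using h _ _ this

lemma LongestPalPrefix.eq_of_occursOnlyAtEnds {p q u : List A} (hp : LongestPalPrefix p u)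
    (hu : u.reverse ≠ u) (hq : q.reverse = q) (hqu : q <+: u) (hends : OccursOnlyAtEnds q u) :
    p = q := by
  obtain ⟨⟨r, rfl⟩, hpal, hmax⟩ := hp
  obtain ⟨s, rfl⟩ : q <:+ p := (prefix_iff_suffix_of_reverse_eq hq hpal).1
    (prefix_of_prefix_length_le hqu (prefix_append _ r) (hmax q hqu hq))
  rcases hends s r rfl with rfl | rfl
  · rfl
  · exact absurd (by simpa using hpal) hu

def LongestPalPrefixNeSuffix (w : List A) : Prop :=
  ∀ u p q : List A, u <:+: w → u.reverse ≠ u →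
    LongestPalPrefix p u → LongestPalSuffix q u → p ≠ q

lemma LongestPalPrefixNeSuffix.reverse_eq_of_occursOnlyAtEnds {w u q : List A}
    (hw : LongestPalPrefixNeSuffix w) (hu : u <:+: w) (hq : q.reverse = q)
    (hpre : q <+: u) (hsuf : q <:+ u) (hends : OccursOnlyAtEnds q u) : u.reverse = u := by
  by_contra hnp
  obtain ⟨p, hp⟩ := exists_longestPalPrefix u
  obtain ⟨p', hp'⟩ := exists_longestPalSuffix u
  have hpq : p = q := hp.eq_of_occursOnlyAtEnds hnp hq hpre hends
  have hp'q : p' = q :=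
    (longestPalPrefix_reverse_iff.2 hp').eq_of_occursOnlyAtEnds (by rwa [reverse_reverse, ne_comm])
      hq ((prefix_reverse_iff_suffix_of_reverse_eq hq).2 hsuf) (hends.reverse hq)
  exact hw u p p' hu hnp hp hp' (hpq.trans hp'q.symm)

lemma LongestPalSuffix.eq_nil_of_eq_append {w v q s t : List A} (hw : LongestPalPrefixNeSuffix w)
    (hv : v <:+: w) (hq : LongestPalSuffix q v) (hst : v = s ++ q ++ t) : t = [] := by
  by_contra ht
  have hsuf : q ++ t <:+ v := ⟨s, by simp [hst]⟩
  -- recursion on `t.length`: an inner occurrence of `q` in `q ++ t` is a later one in `v`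
  have hends : OccursOnlyAtEnds q (q ++ t) := by
    intro s' t' h
    refine or_iff_not_imp_left.2 fun hs' => ?_
    have : t'.length < t.length := by
      have := congrArg length h
      have := length_pos_iff.2 hs'
      simp only [length_append] at *
      omega
    exact hq.eq_nil_of_eq_append hw hv (s := s ++ s') (by rw [hst, append_assoc s, h]; simp)
  have hpal := hw.reverse_eq_of_occursOnlyAtEnds (hsuf.isInfix.trans hv) hq.2.1
    (prefix_append q t) (suffix_of_suffix_length_le hq.1 hsuf (by simp)) hends
  exact ht (by simpa using hq.2.2 _ hsuf hpal)
termination_by t.length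

lemma mem_palFactors [DecidableEq A] {u w : List A} : u ∈ palFactors w ↔ u <:+: w ∧ u.reverse = u := by
  simp only [palFactors, mem_toFinset, mem_filter, mem_flatMap, mem_inits, mem_tails,
    decide_eq_true_eq, infix_iff_suffix_prefix]
  tauto

lemma infix_of_concat_eq_append {v s x r : List A} {a : A} (h : v ++ [a] = s ++ x ++ r)
    (hr : r ≠ []) : x <:+: v := by
  obtain ⟨r', b, rfl⟩ := (eq_nil_or_concat r).resolve_left hr
  have h' : v ++ [a] = s ++ x ++ r' ++ [b] := by simpa using h
  exact ⟨s, r', (append_inj_left' h' rfl).symm⟩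

lemma palFactors_concat [DecidableEq A] {v q : List A} {a : A} (hq : LongestPalSuffix q (v ++ [a])) :
    palFactors (v ++ [a]) = insert q (palFactors v) := by
  ext x
  simp only [Finset.mem_insert, mem_palFactors, infix_concat_iff]
  constructor
  · rintro ⟨hsuf | hinf, hx⟩
    · refine or_iff_not_imp_left.2 fun hxq => ⟨?_, hx⟩
      obtain ⟨r, rfl⟩ : x <+: q := (prefix_iff_suffix_of_reverse_eq hx hq.2.1).2
        (suffix_of_suffix_length_le hsuf hq.1 (hq.2.2 x hsuf hx))
      obtain ⟨s, hs⟩ := hq.1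
      exact infix_of_concat_eq_append (s := s) (by rw [← hs, append_assoc])
        (by rintro rfl; simp at hxq)
    · exact Or.inr ⟨hinf, hx⟩
  · rintro (rfl | ⟨hxv, hx⟩)
    · exact ⟨Or.inl hq.1, hq.2.1⟩
    · exact ⟨Or.inr hxv, hx⟩

end Palindromes

theorem rich_of_unique_pal_prefix_suffix_determination_general {A : Type*} [DecidableEq A]
    (w : List A)
    (h1 : ∀ u p q : List A, u <:+: w → u.reverse ≠ u →
      LongestPalPrefix p u → LongestPalSuffix q u →
      p ≠ q ∧ ¬ p <:+: q ∧ ¬ q <:+: p) :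
    Rich w := by
  have hw : LongestPalPrefixNeSuffix w := fun u p q hu hnp hp hq => (h1 u p q hu hnp hp hq).1
  suffices ∀ v, v <+: w → Rich v from this w (prefix_refl w)
  intro v
  induction v using reverseRecOn with
  | nil => intro _; rfl
  | append_singleton v a ih =>
    intro hvw
    obtain ⟨q, hq⟩ := exists_longestPalSuffix (v ++ [a])
    have hq_new : q ∉ palFactors v := by
      intro hmem
      obtain ⟨⟨s, t, rfl⟩, -⟩ := mem_palFactors.1 hmem
      simpa using hq.eq_nil_of_eq_append hw hvw.isInfix (s := s) (t := t ++ [a]) (by simp)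
    rw [Rich, palFactors_concat hq, Finset.card_insert_of_notMem hq_new,
      ih ((prefix_append v [a]).trans hvw), length_append, length_singleton]

/-- Suppose `w` is a finite word such that for every non-palindromic factor `u` of `w`,
the longest palindromic prefix `p` and the longest palindromic suffix `q` of `u`
satisfy `p ≠ q` and neither is a factor of the other, and any two non-palindromic
factors of `w` with the same longest palindromic prefix and the same longest
palindromic suffix are equal. Then `w` is rich. -/
theorem rich_of_unique_pal_prefix_suffix_determination {A : Type*} [DecidableEq A]
    (w : List A)
    (h1 : ∀ u p q : List A, u <:+: w → u.reverse ≠ u →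
      LongestPalPrefix p u → LongestPalSuffix q u →
      p ≠ q ∧ ¬ p <:+: q ∧ ¬ q <:+: p)
    (h2 : ∀ u v p q : List A, u <:+: w → v <:+: w → u.reverse ≠ u → v.reverse ≠ v →
      LongestPalPrefix p u → LongestPalPrefix p v →
      LongestPalSuffix q u → LongestPalSuffix q v → u = v) :
    Rich w :=
  rich_of_unique_pal_prefix_suffix_determination_general w h1
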